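/- Let 𝖶 be a real random variable with density f_𝖶(w) = (√2 / (3^{1/4} Γ(1/4))) · exp(−w⁴/12), and let Z be a standard normal random variable independent of 𝖶. Then there exists C > 0 such that for all integers n ≥ 2, the total variation distance satisfies d_TV( 𝖶 + n^{−1/4}·Z , 𝖶 ) ≤ C·√( (log n)/n ). -/

import Mathlib

open MeasureTheory Real ProbabilityTheory

/-- Density `f_𝖶(w) = (√2 / (3^{1/4} Γ(1/4))) exp(−w⁴/12)` of the critical limit law. -/
noncomputable def quarticDensity (w : ℝ) : ℝ :=
  (Real.sqrt 2 / ((3 : ℝ) ^ ((1 : ℝ) / 4) * Real.Gamma (1 / 4))) * Real.exp (-w ^ 4 / 12)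

/-- Law of the critical limit random variable `𝖶`. -/
noncomputable def quarticMeasure : Measure ℝ :=
  volume.withDensity fun w => ENNReal.ofReal (quarticDensity w)

/-! Conditionally on `Z = z`, the probability that `𝖶 + εZ` lies in `s` is
`g (ε z)` with `g a = ∫ u in s, f (u - a)`, `f` the density of `𝖶`. Taylor's formula with
integral remainder and Fubini give `|g a - g 0 + a ∫ u in s, f'| ≤ a² ‖f''‖₁` uniformly
in `s`. Since `Z` is centred, the linear term averages out, so the two laws differ by at most
`‖f''‖₁ E[Z²] ε²`, which for `ε = n^{-1/4}` is `O(n^{-1/2})`, a fortiori `O(√(log n / n))`. -/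

section TaylorRemainder

variable {f f' f'' : ℝ → ℝ}

theorem sub_sub_add_mul_eq_integral (hf : ∀ x, HasDerivAt f (f' x) x)
    (hf' : ∀ x, HasDerivAt f' (f'' x) x) (hf'' : Continuous f'') (u a : ℝ) :
    f (u - a) - f u + a * f' u = ∫ t in (0 : ℝ)..1, (1 - t) * a ^ 2 * f'' (u - t * a) := by
  have hline (t : ℝ) : HasDerivAt (fun t : ℝ => u - t * a) (-a) t := by
    simpa using ((hasDerivAt_id t).mul_const a).const_sub u
  have hprim : ∀ t ∈ Set.uIcc (0 : ℝ) 1,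
      HasDerivAt (fun t => f (u - t * a) - (1 - t) * a * f' (u - t * a))
        ((1 - t) * a ^ 2 * f'' (u - t * a)) t := by
    intro t _
    have h := ((hf _).comp t (hline t)).sub
      ((((hasDerivAt_id t).const_sub 1).mul_const a).mul ((hf' _).comp t (hline t)))
    exact h.congr_deriv (by simp only [Function.comp_apply, id]; ring)
  have hcont : Continuous fun t : ℝ => (1 - t) * a ^ 2 * f'' (u - t * a) := by fun_prop
  rw [intervalIntegral.integral_eq_sub_of_hasDerivAt hprim (hcont.intervalIntegrable 0 1)]
  simp only [one_mul, sub_self, zero_mul, sub_zero]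
  ring

theorem integral_abs_sub_sub_add_mul_le (hf : ∀ x, HasDerivAt f (f' x) x)
    (hf' : ∀ x, HasDerivAt f' (f'' x) x) (hf'' : Continuous f'') (hi'' : Integrable f'')
    (a : ℝ) :
    ∫ u, |f (u - a) - f u + a * f' u| ≤ a ^ 2 * ∫ u, |f'' u| := by
  set F : ℝ → ℝ → ℝ := fun t u => |f'' (u - t * a)|
  have hFcont : Continuous (Function.uncurry F) := by fun_prop
  have hF : Integrable (Function.uncurry F)
      ((volume.restrict (Set.Ioc (0 : ℝ) 1)).prod volume) := by
    refine (integrable_prod_iff hFcont.aestronglyMeasurable).2 ⟨.of_forall fun t => ?_, ?_⟩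
    · exact hi''.abs.comp_sub_right (t * a)
    · simp only [F, Function.uncurry_apply_pair, norm_abs_eq_norm, Real.norm_eq_abs]
      simp_rw [integral_sub_right_eq_self (fun u => |f'' u|)]
      exact integrable_const _
  have hpointwise (u : ℝ) : |f (u - a) - f u + a * f' u|
      ≤ a ^ 2 * ∫ t in Set.Ioc (0 : ℝ) 1, F t u := by
    rw [sub_sub_add_mul_eq_integral hf hf' hf'', ← integral_const_mul,
      ← intervalIntegral.integral_of_le zero_le_one, ← Real.norm_eq_abs]
    refine intervalIntegral.norm_integral_le_of_norm_le zero_le_one (.of_forall fun t ht => ?_)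
      ((by fun_prop : Continuous fun t => a ^ 2 * F t u).intervalIntegrable 0 1)
    rw [Real.norm_eq_abs, abs_mul, abs_mul, abs_of_nonneg (sq_nonneg a),
      abs_of_nonneg (by linarith [ht.2] : 0 ≤ 1 - t)]
    have : (1 - t) * a ^ 2 ≤ a ^ 2 := by nlinarith [ht.1, sq_nonneg a]
    exact mul_le_mul_of_nonneg_right this (abs_nonneg _)
  calc ∫ u, |f (u - a) - f u + a * f' u|
      ≤ ∫ u, a ^ 2 * ∫ t in Set.Ioc (0 : ℝ) 1, F t u :=
        integral_mono_of_nonneg (.of_forall fun _ => abs_nonneg _)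
          (hF.integral_prod_right.const_mul _) (.of_forall hpointwise)
    _ = a ^ 2 * ∫ t in Set.Ioc (0 : ℝ) 1, ∫ u, F t u := by
        rw [integral_const_mul, ← integral_integral_swap hF]
    _ = a ^ 2 * ∫ u, |f'' u| := by
        simp only [F, integral_sub_right_eq_self (fun u => |f'' u|)]
        simp

theorem abs_setIntegral_sub_sub_add_mul_le (hf : ∀ x, HasDerivAt f (f' x) x)
    (hf' : ∀ x, HasDerivAt f' (f'' x) x) (hf'' : Continuous f'') (hi : Integrable f)
    (hi' : Integrable f') (hi'' : Integrable f'') (s : Set ℝ) (a : ℝ) :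
    |(∫ u in s, f (u - a)) - (∫ u in s, f u) + a * ∫ u in s, f' u| ≤ a ^ 2 * ∫ u, |f'' u| := by
  have hshift : Integrable fun u => f (u - a) := hi.comp_sub_right a
  have hR : Integrable fun u => f (u - a) - f u + a * f' u :=
    (hshift.sub hi).add (hi'.const_mul a)
  rw [← integral_const_mul, ← integral_sub hshift.integrableOn hi.integrableOn,
    ← integral_add (f := fun u => f (u - a) - f u) (hshift.sub hi).integrableOn
      (hi'.const_mul a).integrableOn]
  calc |∫ u in s, f (u - a) - f u + a * f' u|
      ≤ ∫ u in s, |f (u - a) - f u + a * f' u| := abs_integral_le_integral_abs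
    _ ≤ ∫ u, |f (u - a) - f u + a * f' u| :=
        setIntegral_le_integral hR.abs (.of_forall fun _ => abs_nonneg _)
    _ ≤ a ^ 2 * ∫ u, |f'' u| := integral_abs_sub_sub_add_mul_le hf hf' hf'' hi'' a

end TaylorRemainder

theorem measureReal_withDensity_preimage_add {f : ℝ → ℝ} (hf0 : ∀ x, 0 ≤ f x)
    (hi : Integrable f) {s : Set ℝ} (hs : MeasurableSet s) (a : ℝ) :
    (volume.withDensity fun x => ENNReal.ofReal (f x)).real ((· + a) ⁻¹' s)
      = ∫ u in s, f (u - a) := by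
  have hpre : MeasurableSet ((· + a) ⁻¹' s) := measurable_add_const a hs
  rw [measureReal_def, withDensity_apply _ hpre, ← ofReal_integral_eq_lintegral_ofReal
    hi.integrableOn (.of_forall hf0),
    ENNReal.toReal_ofReal (setIntegral_nonneg hpre fun x _ => hf0 x)]
  simpa using ((measurePreserving_add_right volume a).setIntegral_preimage_emb
    (measurableEmbedding_addRight a) (fun u => f (u - a)) s)

theorem measureReal_map_add_mul_prod (μ ν : Measure ℝ) [IsFiniteMeasure μ] [IsFiniteMeasure ν]
    (ε : ℝ) {s : Set ℝ} (hs : MeasurableSet s) :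
    ((μ.prod ν).map fun p => p.1 + ε * p.2).real s = ∫ z, μ.real ((· + ε * z) ⁻¹' s) ∂ν := by
  have hT : Measurable fun p : ℝ × ℝ => p.1 + ε * p.2 := by fun_prop
  rw [measureReal_def, Measure.map_apply hT hs, Measure.prod_apply_symm (hT hs),
    ← integral_toReal (measurable_measure_prodMk_right (hT hs)).aemeasurable
      (.of_forall fun _ => measure_lt_top _ _)]
  rfl

theorem abs_integral_comp_mul_sub_le {ν : Measure ℝ} [IsProbabilityMeasure ν]
    (hν : MemLp id 2 ν) (hmean : ∫ z, z ∂ν = 0) {g : ℝ → ℝ} (hg : Measurable g) {D K : ℝ}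
    (hgK : ∀ a, |g a - g 0 + a * D| ≤ K * a ^ 2) (ε : ℝ) :
    |∫ z, g (ε * z) ∂ν - g 0| ≤ K * (∫ z, z ^ 2 ∂ν) * ε ^ 2 := by
  have hid : Integrable (fun z => z) ν := hν.integrable one_le_two
  have hsq : Integrable (fun z => z ^ 2) ν := hν.integrable_sq
  have hR : Integrable (fun z => g (ε * z) - g 0 + ε * z * D) ν := by
    refine (hsq.const_mul (K * ε ^ 2)).mono' (by fun_prop) (.of_forall fun z => ?_)
    rw [Real.norm_eq_abs]
    linarith [hgK (ε * z)]
  have hcomp : Integrable (fun z => g (ε * z)) ν := by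
    refine ((hR.sub ((hid.const_mul ε).mul_const D)).add (integrable_const (g 0))).congr ?_
    exact .of_forall fun z => by simp only [Pi.add_apply, Pi.sub_apply]; ring
  have hcentre : ∫ z, g (ε * z) ∂ν - g 0 = ∫ z, (g (ε * z) - g 0 + ε * z * D) ∂ν := by
    rw [integral_add (f := fun z => g (ε * z) - g 0) (hcomp.sub (integrable_const _))
        ((hid.const_mul ε).mul_const D),
      integral_sub hcomp (integrable_const _), integral_mul_const, integral_const_mul, hmean]
    simp
  calc |∫ z, g (ε * z) ∂ν - g 0|
      ≤ ∫ z, |g (ε * z) - g 0 + ε * z * D| ∂ν := hcentre ▸ abs_integral_le_integral_abs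
    _ ≤ ∫ z, K * ε ^ 2 * z ^ 2 ∂ν :=
        integral_mono hR.abs (hsq.const_mul _) fun z => by linarith [hgK (ε * z)]
    _ = K * (∫ z, z ^ 2 ∂ν) * ε ^ 2 := by rw [integral_const_mul]; ring

theorem abs_measureReal_map_add_mul_prod_sub_le {f f' f'' : ℝ → ℝ} (hf0 : ∀ x, 0 ≤ f x)
    (hf : ∀ x, HasDerivAt f (f' x) x) (hf' : ∀ x, HasDerivAt f' (f'' x) x)
    (hf'' : Continuous f'') (hi : Integrable f) (hi' : Integrable f') (hi'' : Integrable f'')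
    {μ : Measure ℝ} (hμ : μ = volume.withDensity fun x => ENNReal.ofReal (f x))
    {ν : Measure ℝ} [IsProbabilityMeasure ν] (hν : MemLp id 2 ν) (hmean : ∫ z, z ∂ν = 0)
    (ε : ℝ) {s : Set ℝ} (hs : MeasurableSet s) :
    |((μ.prod ν).map fun p => p.1 + ε * p.2).real s - μ.real s|
      ≤ (∫ u, |f'' u|) * (∫ z, z ^ 2 ∂ν) * ε ^ 2 := by
  have : IsFiniteMeasure μ := hμ ▸ isFiniteMeasure_withDensity_ofReal hi.hasFiniteIntegral
  set g : ℝ → ℝ := fun a => μ.real ((· + a) ⁻¹' s)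
  have hg : Measurable g := by
    have hadd : MeasurableSet {p : ℝ × ℝ | p.1 + p.2 ∈ s} := measurable_add hs
    exact (measurable_measure_prodMk_right (μ := μ) hadd).ennreal_toReal
  have hgf (a : ℝ) : g a = ∫ u in s, f (u - a) := by
    simp only [g, hμ, measureReal_withDensity_preimage_add hf0 hi hs]
  have hgK (a : ℝ) : |g a - g 0 + a * ∫ u in s, f' u| ≤ (∫ u, |f'' u|) * a ^ 2 := by
    rw [hgf, hgf, mul_comm _ (a ^ 2)]
    simpa using abs_setIntegral_sub_sub_add_mul_le hf hf' hf'' hi hi' hi'' s a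
  have hg0 : g 0 = μ.real s := by simp [g]
  rw [measureReal_map_add_mul_prod μ ν ε hs, ← hg0]
  exact abs_integral_comp_mul_sub_le hν hmean hg hgK ε

noncomputable def quarticDensity' (w : ℝ) : ℝ := -(w ^ 3 / 3) * quarticDensity w

noncomputable def quarticDensity'' (w : ℝ) : ℝ := (w ^ 6 / 9 - w ^ 2) * quarticDensity w

theorem quarticDensity_nonneg (w : ℝ) : 0 ≤ quarticDensity w := by
  unfold quarticDensity
  have : 0 < Gamma (1 / 4) := Gamma_pos_of_pos (by norm_num)
  positivity

theorem hasDerivAt_quarticDensity (w : ℝ) : HasDerivAt quarticDensity (quarticDensity' w) w := by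
  have h := (((hasDerivAt_pow 4 w).const_mul (-1 / 12 : ℝ)).exp).const_mul
    (√2 / ((3 : ℝ) ^ ((1 : ℝ) / 4) * Gamma (1 / 4)))
  refine (h.congr_deriv ?_).congr_of_eventuallyEq (.of_forall fun x => ?_) <;>
    simp only [quarticDensity', quarticDensity] <;> ring_nf

theorem hasDerivAt_quarticDensity' (w : ℝ) :
    HasDerivAt quarticDensity' (quarticDensity'' w) w := by
  have h := ((hasDerivAt_pow 3 w).const_mul (-1 / 3 : ℝ)).mul (hasDerivAt_quarticDensity w)
  refine (h.congr_deriv ?_).congr_of_eventuallyEq (.of_forall fun x => ?_) <;>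
    simp only [quarticDensity'', quarticDensity', Pi.mul_apply] <;> ring_nf

theorem continuous_quarticDensity'' : Continuous quarticDensity'' := by
  unfold quarticDensity'' quarticDensity
  fun_prop

theorem integrable_pow_mul_quarticDensity (k : ℕ) :
    Integrable fun w => w ^ k * quarticDensity w := by
  set c := √2 / ((3 : ℝ) ^ ((1 : ℝ) / 4) * Gamma (1 / 4))
  have hc : 0 ≤ c := by
    have : 0 < Gamma (1 / 4) := Gamma_pos_of_pos (by norm_num)
    positivity
  have hgauss : Integrable fun w : ℝ => w ^ k * exp (-(1 / 12) * w ^ 2) := by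
    simpa using integrable_rpow_mul_exp_neg_mul_sq (b := 1 / 12) (by norm_num) (s := k)
      (by linarith [k.cast_nonneg (α := ℝ)])
  refine (hgauss.norm.const_mul (c * exp (1 / 12))).mono' (by unfold quarticDensity; fun_prop)
    (.of_forall fun w => ?_)
  -- `w⁴ - w² + 1 > 0` puts the quartic exponential under a Gaussian one
  have hexp : exp (-w ^ 4 / 12) ≤ exp (1 / 12) * exp (-(1 / 12) * w ^ 2) := by
    rw [← exp_add]
    exact exp_le_exp.2 (by nlinarith [sq_nonneg (w ^ 2 - 1)])
  have hle : quarticDensity w ≤ c * (exp (1 / 12) * exp (-(1 / 12) * w ^ 2)) :=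
    mul_le_mul_of_nonneg_left hexp hc
  simp only [norm_mul, Real.norm_eq_abs, abs_of_nonneg (quarticDensity_nonneg w),
    abs_of_nonneg (exp_pos _).le]
  calc |w ^ k| * quarticDensity w
      ≤ |w ^ k| * (c * (exp (1 / 12) * exp (-(1 / 12) * w ^ 2))) := by gcongr
    _ = c * exp (1 / 12) * (|w ^ k| * exp (-(1 / 12) * w ^ 2)) := by ring

theorem integrable_quarticDensity : Integrable quarticDensity := by
  simpa using integrable_pow_mul_quarticDensity 0

theorem integrable_quarticDensity' : Integrable quarticDensity' :=
  ((integrable_pow_mul_quarticDensity 3).const_mul (-1 / 3)).congr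
    (.of_forall fun w => by simp only [quarticDensity']; ring)

theorem integrable_quarticDensity'' : Integrable quarticDensity'' :=
  (((integrable_pow_mul_quarticDensity 6).const_mul (1 / 9)).sub
    (integrable_pow_mul_quarticDensity 2)).congr
    (.of_forall fun w => by simp only [quarticDensity'', Pi.sub_apply]; ring)

theorem rpow_neg_one_div_four_sq {x : ℝ} (hx : 0 ≤ x) : (x ^ (-(1 : ℝ) / 4)) ^ 2 = (√x)⁻¹ := by
  rw [← rpow_natCast, ← rpow_mul hx, sqrt_eq_rpow, ← rpow_neg hx]
  norm_num

theorem inv_sqrt_le_sqrt_log_div_div {x : ℝ} (hx : 2 ≤ x) :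
    (√x)⁻¹ ≤ √(log x / x) / √(log 2) := by
  have hlog2 : 0 < √(log 2) := sqrt_pos.2 (log_pos one_lt_two)
  rw [le_div_iff₀ hlog2, sqrt_div' _ (by linarith), div_eq_mul_inv, mul_comm]
  exact mul_le_mul_of_nonneg_right (sqrt_le_sqrt (log_le_log two_pos hx)) (by positivity)

/-- Total variation bound: adding independent Gaussian noise of size `n^{-1/4}` to `𝖶`
perturbs its law by at most `C √(log n / n)` in total variation (uniformly over Borel sets). -/
theorem stmt16 :
    ∃ C > 0, ∀ n : ℕ, 2 ≤ n → ∀ s : Set ℝ, MeasurableSet s →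
      |((Measure.map (fun p : ℝ × ℝ => p.1 + (n : ℝ) ^ (-(1 : ℝ) / 4) * p.2)
            (quarticMeasure.prod (gaussianReal 0 1))) s).toReal -
          (quarticMeasure s).toReal| ≤ C * Real.sqrt (Real.log n / n) := by
  set K := ∫ u, |quarticDensity'' u|
  set M := ∫ z, z ^ 2 ∂gaussianReal 0 1
  have hKM : 0 ≤ K * M :=
    mul_nonneg (integral_nonneg fun _ => abs_nonneg _) (integral_nonneg fun _ => sq_nonneg _)
  refine ⟨(K * M + 1) / √(log 2), by positivity, fun n hn s hs => ?_⟩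
  have hn2 : (2 : ℝ) ≤ n := by exact_mod_cast hn
  have hbound := abs_measureReal_map_add_mul_prod_sub_le (μ := quarticMeasure)
    quarticDensity_nonneg hasDerivAt_quarticDensity hasDerivAt_quarticDensity'
    continuous_quarticDensity'' integrable_quarticDensity integrable_quarticDensity'
    integrable_quarticDensity'' rfl
    (memLp_id_gaussianReal' (μ := 0) (v := 1) 2 (by norm_num))
    (integral_id_gaussianReal (μ := 0) (v := 1))
    ((n : ℝ) ^ (-(1 : ℝ) / 4)) hs
  rw [rpow_neg_one_div_four_sq (by linarith)] at hbound
  calc _ ≤ K * M * (√n)⁻¹ := hbound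
    _ ≤ (K * M + 1) * (√(log n / n) / √(log 2)) :=
        mul_le_mul (by linarith) (inv_sqrt_le_sqrt_log_div_div hn2) (by positivity) (by linarith)
    _ = _ := by ring
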